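/- arXiv:1311.1797 — 6 statements merged into one kernel-verified Lean document; each statement's English description precedes it below -/
import Mathlib

section
/- For any symmetric positive semidefinite k×k real matrix M with Tr(M·Σ) ≠ 0, one has 0 ≤ Tr(M·C_u) ≤ Tr(M·Σ); in particular the generalized sensitivity measure S^u(M;f) = Tr(M·C_u)/Tr(M·Σ) satisfies 0 ≤ S^u(M;f) ≤ 1. -/
open MeasureTheory ProbabilityTheory

/-- The covariance matrix of an `ℝ^k`-valued square-integrable random vector `T`:
`(Cov T)_{l,l'} = 𝔼[(T_l − 𝔼 T_l) (T_{l'} − 𝔼 T_{l'})]`. -/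
noncomputable def covMatrix {Ω : Type*} [MeasurableSpace Ω] (μ : Measure Ω) (k : ℕ)
    (T : Ω → Fin k → ℝ) : Matrix (Fin k) (Fin k) ℝ :=
  Matrix.of fun l l' =>
    ∫ ω, (T ω l - ∫ ω', T ω' l ∂μ) * (T ω l' - ∫ ω', T ω' l' ∂μ) ∂μ



private lemma integrable_mul_of_memL2 {α : Type*} [MeasurableSpace α] {μ : Measure α}
    {f g : α → ℝ} (hf : MemLp f 2 μ) (hg : MemLp g 2 μ) :
    Integrable (fun x => f x * g x) μ := by
  have h : MemLp (f • g) 1 μ :=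
    hg.smul hf
  rw [memLp_one_iff_integrable] at h
  exact h

private lemma memL2_condexp {α : Type*} [MeasurableSpace α] {m m0 : MeasurableSpace α}
    (hm : m ≤ m0) {μ : Measure α} [IsFiniteMeasure μ] {f : α → ℝ} (hf : MemLp f 2 μ) :
    MemLp (μ[f|m]) 2 μ := by
  haveI : SigmaFinite (μ.trim hm) := by
    haveI : IsFiniteMeasure (μ.trim hm) := isFiniteMeasure_trim hm
    infer_instance
  set fL : Lp ℝ 2 μ := hf.toLp f with hfL
  have hcond : ((condExpL2 ℝ ℝ hm fL : α →₂[μ] ℝ) : α → ℝ) =ᵐ[μ] μ[f|m] := by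
    refine ae_eq_condExp_of_forall_setIntegral_eq hm (hf.integrable one_le_two)
      (fun s _ _ => ((Lp.memLp _).integrable one_le_two).integrableOn)
      (fun s hs hμs => ?_) (lpMeas.aestronglyMeasurable _)
    rw [integral_condExpL2_eq hm fL hs hμs.ne]
    exact integral_congr_ae (ae_restrict_of_ae hf.coeFn_toLp)
  exact (Lp.memLp _).ae_eq hcond

private lemma integral_sq_condexp_le {α : Type*} [MeasurableSpace α] {m m0 : MeasurableSpace α}
    (hm : m ≤ m0) {μ : Measure α} [IsFiniteMeasure μ] {f : α → ℝ} (hf : MemLp f 2 μ) :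
    ∫ x, ((μ[f|m]) x) ^ 2 ∂μ ≤ ∫ x, (f x) ^ 2 ∂μ := by
  haveI : SigmaFinite (μ.trim hm) := by
    haveI : IsFiniteMeasure (μ.trim hm) := isFiniteMeasure_trim hm
    infer_instance
  set g := μ[f|m] with hgdef
  have hg2 : MemLp g 2 μ := memL2_condexp hm hf
  have hfint : Integrable f μ := hf.integrable one_le_two
  have hgf : Integrable (fun x => g x * f x) μ := integrable_mul_of_memL2 hg2 hf
  have hgg : Integrable (fun x => g x * g x) μ := integrable_mul_of_memL2 hg2 hg2
  have hff : Integrable (fun x => f x * f x) μ := integrable_mul_of_memL2 hf hf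
  have hpull : μ[g * f|m] =ᵐ[μ] fun x => g x * g x := by
    have h := condExp_mul_of_stronglyMeasurable_left (μ := μ) (m := m) (f := g) (g := f)
      stronglyMeasurable_condExp hgf hfint
    filter_upwards [h] with x hx
    simpa [Pi.mul_apply, hgdef] using hx
  have hkey : ∫ x, g x * f x ∂μ = ∫ x, g x * g x ∂μ := by
    calc ∫ x, g x * f x ∂μ = ∫ x, (g * f) x ∂μ := by simp [Pi.mul_apply]
      _ = ∫ x, (μ[g * f|m]) x ∂μ := (integral_condExp hm).symm
      _ = ∫ x, g x * g x ∂μ := integral_congr_ae hpull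
  have h0 : 0 ≤ ∫ x, (f x - g x) ^ 2 ∂μ := integral_nonneg fun x => sq_nonneg _
  have hexp : ∫ x, (f x - g x) ^ 2 ∂μ
      = ∫ x, f x * f x ∂μ - 2 * ∫ x, g x * f x ∂μ + ∫ x, g x * g x ∂μ := by
    have hfun : (fun x => (f x - g x) ^ 2)
        = fun x => (f x * f x - 2 * (g x * f x)) + g x * g x := by
      funext x; ring
    have hL : Integrable (fun x => f x * f x - 2 * (g x * f x)) μ :=
      hff.sub (hgf.const_mul 2)
    rw [hfun, integral_add hL hgg, integral_sub hff (hgf.const_mul 2),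
      MeasureTheory.integral_const_mul]
  have e1 : ∫ x, (f x) ^ 2 ∂μ = ∫ x, f x * f x ∂μ := by simp [sq]
  have e2 : ∫ x, (g x) ^ 2 ∂μ = ∫ x, g x * g x ∂μ := by simp [sq]
  rw [e1, e2]
  linarith [h0, hexp, hkey]

private lemma condexp_pi_apply {α : Type*} [MeasurableSpace α] {m m0 : MeasurableSpace α}
    (hm : m ≤ m0) {μ : Measure α} [IsFiniteMeasure μ] {k : ℕ} {Y : α → Fin k → ℝ}
    (hY : Integrable Y μ) (l : Fin k) :
    (fun ω => (μ[Y|m]) ω l) =ᵐ[μ] μ[fun ω => Y ω l|m] := by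
  haveI : SigmaFinite (μ.trim hm) := by
    haveI : IsFiniteMeasure (μ.trim hm) := isFiniteMeasure_trim hm
    infer_instance
  refine ae_eq_condExp_of_forall_setIntegral_eq hm
    ((ContinuousLinearMap.proj (R := ℝ) (φ := fun _ : Fin k => ℝ) l).integrable_comp hY)
    (fun s _ _ => ((ContinuousLinearMap.proj (R := ℝ) (φ := fun _ : Fin k => ℝ)
      l).integrable_comp integrable_condExp).integrableOn)
    (fun s hs hμs => ?_) ?_
  · have h1 : ∫ ω in s, (μ[Y|m]) ω l ∂μ = (∫ ω in s, (μ[Y|m]) ω ∂μ) l :=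
      ((ContinuousLinearMap.proj (R := ℝ) (φ := fun _ : Fin k => ℝ)
        l).integral_comp_comm integrable_condExp.integrableOn)
    have h2 : ∫ ω in s, Y ω l ∂μ = (∫ ω in s, Y ω ∂μ) l :=
      ((ContinuousLinearMap.proj (R := ℝ) (φ := fun _ : Fin k => ℝ)
        l).integral_comp_comm hY.integrableOn)
    rw [h1, h2, setIntegral_condExp hm hY hs]
  · exact ((continuous_apply l).comp_stronglyMeasurable
      (stronglyMeasurable_condExp (m := m) (μ := μ) (f := Y))).aestronglyMeasurable

open Matrix in
private lemma trace_mul_covMatrix' {α : Type*} [MeasurableSpace α] {μ : Measure α}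
    [IsProbabilityMeasure μ] {k : ℕ} (A : Matrix (Fin k) (Fin k) ℝ) (T : α → Fin k → ℝ)
    (covM : Matrix (Fin k) (Fin k) ℝ)
    (hcovM : covM = Matrix.of fun l l' =>
      ∫ ω, (T ω l - ∫ ω', T ω' l ∂μ) * (T ω l' - ∫ ω', T ω' l' ∂μ) ∂μ)
    (hT : ∀ l, MemLp (fun ω => T ω l) 2 μ) :
    Matrix.trace (Aᵀ * A * covM)
      = ∑ j, ∫ ω, (∑ l, A j l * (T ω l - ∫ ω', T ω' l ∂μ)) ^ 2 ∂μ := by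
  subst hcovM
  set Tc : Fin k → α → ℝ := fun l ω => T ω l - ∫ ω', T ω' l ∂μ with hTc
  have hTcL2 : ∀ l, MemLp (Tc l) 2 μ := fun l => (hT l).sub (memLp_const _)
  have hint : ∀ l i, Integrable (fun ω => Tc l ω * Tc i ω) μ :=
    fun l i => integrable_mul_of_memL2 (hTcL2 l) (hTcL2 i)
  have hC : ∀ l i, (Matrix.of fun l l' => ∫ ω, Tc l ω * Tc l' ω ∂μ : Matrix (Fin k) (Fin k) ℝ) l i
      = ∫ ω, Tc l ω * Tc i ω ∂μ := fun l i => rfl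
  have hRHS : ∀ j, ∫ ω, (∑ l, A j l * Tc l ω) ^ 2 ∂μ
      = ∑ l, ∑ i, A j l * A j i * ∫ ω, Tc l ω * Tc i ω ∂μ := by
    intro j
    have h1 : (fun ω => (∑ l, A j l * Tc l ω) ^ 2)
        = fun ω => ∑ l, ∑ i, A j l * A j i * (Tc l ω * Tc i ω) := by
      funext ω
      rw [sq, Finset.sum_mul_sum]
      exact Finset.sum_congr rfl fun l _ => Finset.sum_congr rfl fun i _ => by ring
    rw [h1, integral_finset_sum _ (fun l _ => integrable_finset_sum _
      (fun i _ => (hint l i).const_mul _))]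
    refine Finset.sum_congr rfl fun l _ => ?_
    rw [integral_finset_sum _ (fun i _ => (hint l i).const_mul _)]
    exact Finset.sum_congr rfl fun i _ => MeasureTheory.integral_const_mul _ _
  rw [Finset.sum_congr rfl fun j _ => hRHS j]
  have hCsymm : ∀ l i, (∫ ω, Tc i ω * Tc l ω ∂μ) = ∫ ω, Tc l ω * Tc i ω ∂μ := fun l i =>
    integral_congr_ae (Filter.Eventually.of_forall fun ω => mul_comm _ _)
  rw [Matrix.trace]
  simp only [Matrix.diag_apply, Matrix.mul_apply, Matrix.transpose_apply, Finset.sum_mul,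
    Matrix.of_apply]
  calc ∑ x : Fin k, ∑ x1 : Fin k, ∑ i : Fin k, A i x * A i x1 * ∫ ω, Tc x1 ω * Tc x ω ∂μ
      = ∑ x : Fin k, ∑ x1 : Fin k, ∑ i : Fin k, A i x * A i x1 * ∫ ω, Tc x ω * Tc x1 ω ∂μ :=
        Finset.sum_congr rfl fun x _ => Finset.sum_congr rfl fun x1 _ =>
          Finset.sum_congr rfl fun i _ => by rw [hCsymm]
    _ = ∑ x : Fin k, ∑ i : Fin k, ∑ x1 : Fin k, A i x * A i x1 * ∫ ω, Tc x ω * Tc x1 ω ∂μ := by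
        exact Finset.sum_congr rfl fun x _ => Finset.sum_comm ..
    _ = ∑ i : Fin k, ∑ x : Fin k, ∑ x1 : Fin k, A i x * A i x1 * ∫ ω, Tc x ω * Tc x1 ω ∂μ :=
        Finset.sum_comm ..

/-- For any symmetric positive semidefinite `M` with `Tr(M Σ) ≠ 0`,
`0 ≤ Tr(M C_u) ≤ Tr(M Σ)`, hence `0 ≤ S^u(M;f) ≤ 1`. -/
theorem generalized_sensitivity_nonneg_le_one
    {Ω Eu Ev : Type*} [MeasurableSpace Ω] [MeasurableSpace Eu] [MeasurableSpace Ev]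
    (P : Measure Ω) [IsProbabilityMeasure P]
    (k : ℕ) (hk : 1 ≤ k)
    (Xu : Ω → Eu) (Xv : Ω → Ev) (hXu : Measurable Xu) (hXv : Measurable Xv)
    (hindep : IndepFun Xu Xv P)
    (f : Eu × Ev → (Fin k → ℝ)) (hf : Measurable f)
    (Y : Ω → Fin k → ℝ) (hY : Y = fun ω => f (Xu ω, Xv ω))
    (hY2 : MemLp Y 2 P)
    (c : Fin k → ℝ) (hc : c = fun l => ∫ ω, Y ω l ∂P)
    (fu fv r : Ω → Fin k → ℝ)
    (hfu : fu = fun ω => (P[Y | MeasurableSpace.comap Xu inferInstance]) ω - c)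
    (hfv : fv = fun ω => (P[Y | MeasurableSpace.comap Xv inferInstance]) ω - c)
    (hr : r = fun ω => Y ω - c - fu ω - fv ω)
    (M : Matrix (Fin k) (Fin k) ℝ)
    (hMsymm : M.IsSymm) (hMpsd : M.PosSemidef)
    (hM : Matrix.trace (M * covMatrix P k Y) ≠ 0) :
    0 ≤ Matrix.trace (M * covMatrix P k fu)
      ∧ Matrix.trace (M * covMatrix P k fu) ≤ Matrix.trace (M * covMatrix P k Y)
      ∧ 0 ≤ Matrix.trace (M * covMatrix P k fu) / Matrix.trace (M * covMatrix P k Y)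
      ∧ Matrix.trace (M * covMatrix P k fu) / Matrix.trace (M * covMatrix P k Y) ≤ 1 := by
  classical
  rename_i instO instEu instEv instP
  have hm := hXu.comap_le
  set m : MeasurableSpace Ω := MeasurableSpace.comap Xu inferInstance with hmdef
  letI instO' : MeasurableSpace Ω := instO
  haveI : SigmaFinite (P.trim hm) := by
    haveI : IsFiniteMeasure (P.trim hm) := isFiniteMeasure_trim hm
    infer_instance
  have hYint : Integrable Y P := hY2.integrable one_le_two
  have hYl2 : ∀ l, MemLp (fun ω => Y ω l) 2 P := fun l => by
    have := (ContinuousLinearMap.proj (R := ℝ) (φ := fun _ : Fin k => ℝ) l).comp_memLp' hY2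
    exact this
  have hYlint : ∀ l, Integrable (fun ω => Y ω l) P := fun l => (hYl2 l).integrable one_le_two
  have hc' : ∀ l, ∫ ω, Y ω l ∂P = c l := fun l => by rw [hc]
  set g : Ω → Fin k → ℝ := fun ω l => (P[fun ω' => Y ω' l|m]) ω with hgdef
  have hgl2 : ∀ l, MemLp (fun ω => g ω l) 2 P := fun l => memL2_condexp hm (hYl2 l)
  have hglint : ∀ l, Integrable (fun ω => g ω l) P := fun l => integrable_condExp
  have hgmean : ∀ l, ∫ ω, g ω l ∂P = c l := fun l => by
    rw [← hc' l]; exact integral_condExp hm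
  -- fu agrees a.e. componentwise with g - c
  have hflae : ∀ l : Fin k, (fun ω => fu ω l) =ᵐ[P] fun ω => g ω l - c l := by
    intro l
    filter_upwards [condexp_pi_apply hm hYint l] with ω hω
    rw [hfu]
    simp only [Pi.sub_apply]
    rw [← hmdef] at *
    rw [hω]
  have hfmean : ∀ l : Fin k, ∫ ω, fu ω l ∂P = 0 := by
    intro l
    rw [integral_congr_ae (hflae l), integral_sub (hglint l) (integrable_const _),
      hgmean, integral_const]
    simp
  -- the two covariance matrices agree
  have hcov : covMatrix P k fu = covMatrix P k g := by
    ext l i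
    show (∫ ω, (fu ω l - ∫ ω', fu ω' l ∂P) * (fu ω i - ∫ ω', fu ω' i ∂P) ∂P)
      = ∫ ω, (g ω l - ∫ ω', g ω' l ∂P) * (g ω i - ∫ ω', g ω' i ∂P) ∂P
    refine integral_congr_ae ?_
    filter_upwards [hflae l, hflae i] with ω h1 h2
    rw [h1, h2, hfmean l, hfmean i, hgmean l, hgmean i]
    ring
  -- decompose M
  obtain ⟨A, hAM⟩ : ∃ A : Matrix (Fin k) (Fin k) ℝ, M = star A * A := by
    open scoped MatrixOrder in
    exact CStarAlgebra.nonneg_iff_eq_star_mul_self.mp hMpsd.nonneg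
  have hMdecomp : M = A.transpose * A := by
    rw [hAM]; rfl
  -- trace formulas
  have hTg : Matrix.trace (M * covMatrix P k fu)
      = ∑ j, ∫ ω, (∑ l, A j l * (g ω l - c l)) ^ 2 ∂P := by
    rw [hcov, hMdecomp, trace_mul_covMatrix' A g (covMatrix P k g) rfl hgl2]
    simp only [hgmean]
  have hTY : Matrix.trace (M * covMatrix P k Y)
      = ∑ j, ∫ ω, (∑ l, A j l * (Y ω l - c l)) ^ 2 ∂P := by
    rw [hMdecomp, trace_mul_covMatrix' A Y (covMatrix P k Y) rfl hYl2]
    simp only [hc']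
  -- a.e. identification of the "g" linear statistics with conditional expectations
  have hae : ∀ j, (fun ω => ∑ l, A j l * (g ω l - c l))
      =ᵐ[P] P[fun ω => ∑ l, A j l * (Y ω l - c l)|m] := by
    intro j
    have hterm : ∀ l : Fin k,
        P[fun ω => A j l * (Y ω l - c l)|m] =ᵐ[P] fun ω => A j l * (g ω l - c l) := by
      intro l
      have hfeq : (fun ω => A j l * (Y ω l - c l))
          = (A j l) • ((fun ω => Y ω l) - fun _ => c l) := by
        funext ω; simp [smul_eq_mul]
      rw [hfeq]
      have hsmul := condExp_smul (μ := P) (m := m) (A j l) ((fun ω => Y ω l) - fun _ => c l)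
      have hsub := condExp_sub (μ := P) (m := m) (hYlint l) (integrable_const (c l))
      have hconst := condExp_const (μ := P) hm (c l)
      filter_upwards [hsmul, hsub] with ω h1 h2
      rw [h1]
      simp only [Pi.smul_apply, smul_eq_mul]
      rw [h2]
      simp only [Pi.sub_apply, hconst]
      rfl
  -- combine over the finite sum
    have hsum := condExp_finset_sum (μ := P) (m := m) (s := Finset.univ)
      (f := fun l : Fin k => fun ω => A j l * (Y ω l - c l))
      (fun l _ => ((hYlint l).sub (integrable_const _)).const_mul _)
    have hall : ∀ᵐ ω ∂P, ∀ l : Fin k,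
        (P[fun ω => A j l * (Y ω l - c l)|m]) ω = A j l * (g ω l - c l) :=
      (ae_all_iff).mpr fun l => hterm l
    have hfun : (fun ω => ∑ l, A j l * (Y ω l - c l))
        = ∑ l : Fin k, (fun ω => A j l * (Y ω l - c l)) := by
      funext ω; simp [Finset.sum_apply]
    rw [hfun]
    filter_upwards [hsum, hall] with ω h1 h2
    rw [h1]
    simp only [Finset.sum_apply]
    exact (Finset.sum_congr rfl fun l _ => h2 l).symm
  -- per-index inequality
  have hineq : ∀ j, ∫ ω, (∑ l, A j l * (g ω l - c l)) ^ 2 ∂P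
      ≤ ∫ ω, (∑ l, A j l * (Y ω l - c l)) ^ 2 ∂P := by
    intro j
    have hWY2 : MemLp (fun ω => ∑ l, A j l * (Y ω l - c l)) 2 P :=
      memLp_finset_sum _ (fun l _ => ((hYl2 l).sub (memLp_const _)).const_mul _)
    have heq : ∫ ω, (∑ l, A j l * (g ω l - c l)) ^ 2 ∂P
        = ∫ ω, ((P[fun ω => ∑ l, A j l * (Y ω l - c l)|m]) ω) ^ 2 ∂P := by
      refine integral_congr_ae ?_
      filter_upwards [hae j] with ω hω
      rw [hω]
    rw [heq]
    exact integral_sq_condexp_le hm hWY2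
  have hnonneg : 0 ≤ Matrix.trace (M * covMatrix P k fu) := by
    rw [hTg]
    exact Finset.sum_nonneg fun j _ => integral_nonneg fun ω => sq_nonneg _
  have hle : Matrix.trace (M * covMatrix P k fu) ≤ Matrix.trace (M * covMatrix P k Y) := by
    rw [hTg, hTY]
    exact Finset.sum_le_sum fun j _ => hineq j
  have hDpos : 0 < Matrix.trace (M * covMatrix P k Y) :=
    (hnonneg.trans hle).lt_of_ne (Ne.symm hM)
  exact ⟨hnonneg, hle, div_nonneg hnonneg hDpos.le, (div_le_one hDpos).mpr hle⟩
end

section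
/- The generalized Sobol index S^u(f) = Tr(C_u)/Tr(Σ) is invariant by left-composition of f by any isometry and by any nonzero scaling of ℝ^k: if O is a k×k real matrix with Oᵀ·O = Id_k and λ ∈ ℝ, λ ≠ 0, and Tr(Σ) ≠ 0, then, denoting by Σ_O and C_{u,O} (resp. Σ_λ and C_{u,λ}) the covariance matrices of O·Y and 𝔼[O·Y | σ(X_u)] (resp. of λ·Y and 𝔼[λ·Y | σ(X_u)]), one has Tr(C_{u,O})/Tr(Σ_O) = Tr(C_u)/Tr(Σ) and Tr(C_{u,λ})/Tr(Σ_λ) = Tr(C_u)/Tr(Σ). -/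
open MeasureTheory ProbabilityTheory Matrix

section Aux

variable {Ω : Type*} [MeasurableSpace Ω] {P : Measure Ω} [IsProbabilityMeasure P] {k : ℕ}

lemma trace_cov (T : Ω → Fin k → ℝ) :
    (covMatrix P k T).trace = ∑ l, ∫ ω, (T ω l - ∫ ω', T ω' l ∂P) ^ 2 ∂P := by
  simp only [covMatrix, Matrix.trace, Matrix.diag, Matrix.of_apply, pow_two]

lemma sum_sq_mulVec (O : Matrix (Fin k) (Fin k) ℝ) (hO : Oᵀ * O = 1) (x : Fin k → ℝ) :
    ∑ l, (O.mulVec x l) ^ 2 = ∑ j, (x j) ^ 2 := by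
  have h1 : ∑ l, O.mulVec x l ^ 2 = O.mulVec x ⬝ᵥ O.mulVec x := by
    simp [dotProduct, pow_two]
  have h3 : (O.mulVec x) ᵥ* O = x := by
    rw [← Matrix.mulVec_transpose, Matrix.mulVec_mulVec, hO, Matrix.one_mulVec]
  rw [h1, Matrix.dotProduct_mulVec, h3]
  simp [dotProduct, pow_two]

lemma trace_cov_mulVec {T : Ω → Fin k → ℝ} (hTl : ∀ l, MemLp (fun ω => T ω l) 2 P)
    (O : Matrix (Fin k) (Fin k) ℝ) (hO : Oᵀ * O = 1) :
    (covMatrix P k (fun ω => O.mulVec (T ω))).trace = (covMatrix P k T).trace := by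
  set mα : Fin k → ℝ := fun l => ∫ ω, T ω l ∂P with hmα
  have hTint : ∀ l, Integrable (fun ω => T ω l) P := fun l => (hTl l).integrable one_le_two
  have hmean : ∀ l, ∫ ω, O.mulVec (T ω) l ∂P = O.mulVec mα l := by
    intro l
    simp only [Matrix.mulVec, dotProduct]
    rw [integral_finset_sum _ fun j _ => (hTint j).const_mul _]
    exact Finset.sum_congr rfl fun j _ => integral_const_mul _ _
  have hZ : ∀ l, MemLp (fun ω => T ω l - mα l) 2 P := fun l => (hTl l).sub (memLp_const _)
  have hOZ : ∀ l, MemLp (fun ω => O.mulVec (T ω - mα) l) 2 P := by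
    intro l
    have h : (fun ω => O.mulVec (T ω - mα) l) = fun ω => ∑ j, O l j * (T ω j - mα j) := by
      funext ω; simp [Matrix.mulVec, dotProduct]
    rw [h]
    exact memLp_finset_sum _ fun j _ => ((hZ j).const_mul _)
  rw [trace_cov, trace_cov]
  calc ∑ l, ∫ ω, (O.mulVec (T ω) l - ∫ ω', O.mulVec (T ω') l ∂P) ^ 2 ∂P
      = ∑ l, ∫ ω, (O.mulVec (T ω - mα) l) ^ 2 ∂P := by
        refine Finset.sum_congr rfl fun l _ => ?_
        rw [hmean l]
        refine integral_congr_ae (Filter.Eventually.of_forall fun ω => ?_)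
        simp [Matrix.mulVec_sub]
    _ = ∫ ω, ∑ l, (O.mulVec (T ω - mα) l) ^ 2 ∂P :=
        (integral_finset_sum _ fun l _ => (hOZ l).integrable_sq).symm
    _ = ∫ ω, ∑ j, (T ω j - mα j) ^ 2 ∂P := by
        refine integral_congr_ae (Filter.Eventually.of_forall fun ω => ?_)
        simpa [Pi.sub_apply] using sum_sq_mulVec O hO (T ω - mα)
    _ = ∑ j, ∫ ω, (T ω j - mα j) ^ 2 ∂P :=
        integral_finset_sum _ fun j _ => (hZ j).integrable_sq

lemma trace_cov_smul (T : Ω → Fin k → ℝ) (lam : ℝ) :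
    (covMatrix P k (fun ω => lam • T ω)).trace = lam ^ 2 * (covMatrix P k T).trace := by
  simp only [covMatrix, Matrix.trace, Matrix.diag, Matrix.of_apply, Pi.smul_apply, smul_eq_mul]
  rw [Finset.mul_sum]
  refine Finset.sum_congr rfl fun l _ => ?_
  rw [← integral_const_mul]
  have hmean : ∫ ω, lam * T ω l ∂P = lam * ∫ ω, T ω l ∂P := integral_const_mul _ _
  rw [hmean]
  exact integral_congr_ae (Filter.Eventually.of_forall fun ω => by ring)

lemma covMatrix_sub_const {T : Ω → Fin k → ℝ} (hTint : ∀ l, Integrable (fun ω => T ω l) P)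
    (c : Fin k → ℝ) : covMatrix P k (fun ω => T ω - c) = covMatrix P k T := by
  have hmean : ∀ j, ∫ ω, (T ω - c) j ∂P = (∫ ω, T ω j ∂P) - c j := by
    intro j
    simp only [Pi.sub_apply]
    rw [integral_sub (hTint j) (integrable_const _), integral_const]
    simp
  ext l l'
  simp only [covMatrix, Matrix.of_apply]
  rw [hmean l, hmean l']
  refine integral_congr_ae (Filter.Eventually.of_forall fun ω => ?_)
  simp only [Pi.sub_apply]
  ring

lemma covMatrix_congr_ae {T T' : Ω → Fin k → ℝ} (h : T =ᵐ[P] T') :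
    covMatrix P k T = covMatrix P k T' := by
  have hj : ∀ j, ∫ ω, T ω j ∂P = ∫ ω, T' ω j ∂P := fun j =>
    integral_congr_ae (h.mono fun ω hω => by simp [hω])
  ext l l'
  simp only [covMatrix, Matrix.of_apply]
  rw [hj l, hj l']
  exact integral_congr_ae (h.mono fun ω hω => by simp [hω])

lemma condexp_comp_clm {E F : Type*} [NormedAddCommGroup E] [NormedSpace ℝ E] [CompleteSpace E]
    [NormedAddCommGroup F] [NormedSpace ℝ F] [CompleteSpace F]
    {m m0 : MeasurableSpace Ω} (hm : m ≤ m0) {P : Measure Ω} [IsFiniteMeasure P]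
    (L : E →L[ℝ] F) {T : Ω → E} (hT : Integrable T P) :
    P[fun ω => L (T ω)|m] =ᵐ[P] fun ω => L ((P[T|m]) ω) := by
  refine (ae_eq_condExp_of_forall_setIntegral_eq hm (L.integrable_comp hT)
    (fun s _ _ => (L.integrable_comp integrable_condExp).integrableOn)
    (fun s hs hμs => ?_)
    ((L.continuous.comp_stronglyMeasurable stronglyMeasurable_condExp).aestronglyMeasurable)).symm
  rw [L.integral_comp_comm integrable_condExp.integrableOn, setIntegral_condExp hm hT hs,
    ← L.integral_comp_comm hT.integrableOn]

lemma memℒp_two_condexp {m m0 : MeasurableSpace Ω} (hm : m ≤ m0) {P : Measure Ω}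
    [IsFiniteMeasure P] {f : Ω → ℝ} (hf : MemLp f 2 P) : MemLp (P[f|m]) 2 P := by
  have h : ((condExpL2 ℝ ℝ hm (hf.toLp f) : Lp ℝ 2 P) : Ω → ℝ) =ᵐ[P] P[f|m] := by
    refine ae_eq_condExp_of_forall_setIntegral_eq hm (hf.integrable one_le_two)
      (fun s _ _ => ((Lp.memLp _).integrable one_le_two).integrableOn)
      (fun s hs hμs => ?_) (lpMeas.aestronglyMeasurable _)
    rw [integral_condExpL2_eq hm (hf.toLp f) hs hμs.ne]
    exact setIntegral_congr_ae (hm s hs) (hf.coeFn_toLp.mono fun ω hω _ => hω)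
  exact (Lp.memLp _).ae_eq h

end Aux

/-- **The generalized Sobol index `S^u(f) = Tr(C_u)/Tr(Σ)` is invariant by
left-composition of `f` by any isometry and by any nonzero scaling of `ℝ^k`.** -/
theorem sobol_index_isometry_scaling_invariant
    {Ω Eu Ev : Type*} [MeasurableSpace Ω] [MeasurableSpace Eu] [MeasurableSpace Ev]
    (P : Measure Ω) [IsProbabilityMeasure P]
    (k : ℕ) (hk : 1 ≤ k)
    (Xu : Ω → Eu) (Xv : Ω → Ev) (hXu : Measurable Xu) (hXv : Measurable Xv)
    (hindep : IndepFun Xu Xv P)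
    (f : Eu × Ev → (Fin k → ℝ)) (hf : Measurable f)
    (Y : Ω → Fin k → ℝ) (hY : Y = fun ω => f (Xu ω, Xv ω))
    (hY2 : MemLp Y 2 P)
    (c : Fin k → ℝ) (hc : c = fun l => ∫ ω, Y ω l ∂P)
    (fu : Ω → Fin k → ℝ)
    (hfu : fu = fun ω => (P[Y | MeasurableSpace.comap Xu inferInstance]) ω - c)
    (hTr : Matrix.trace (covMatrix P k Y) ≠ 0)
    (O : Matrix (Fin k) (Fin k) ℝ) (hO : Oᵀ * O = 1)
    (lam : ℝ) (hlam : lam ≠ 0)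
    (OY lamY : Ω → Fin k → ℝ)
    (hOY : OY = fun ω => O.mulVec (Y ω)) (hlamY : lamY = fun ω => lam • Y ω)
    (SigO CuO SigLam CuLam : Matrix (Fin k) (Fin k) ℝ)
    (hSigO : SigO = covMatrix P k OY)
    (hCuO : CuO = covMatrix P k (P[OY | MeasurableSpace.comap Xu inferInstance]))
    (hSigLam : SigLam = covMatrix P k lamY)
    (hCuLam : CuLam = covMatrix P k (P[lamY | MeasurableSpace.comap Xu inferInstance])) :
    Matrix.trace CuO / Matrix.trace SigO
        = Matrix.trace (covMatrix P k fu) / Matrix.trace (covMatrix P k Y)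
      ∧ Matrix.trace CuLam / Matrix.trace SigLam
        = Matrix.trace (covMatrix P k fu) / Matrix.trace (covMatrix P k Y) := by
  have hm : MeasurableSpace.comap Xu inferInstance ≤ ‹MeasurableSpace Ω› := hXu.comap_le
  set g : Ω → Fin k → ℝ := P[Y | MeasurableSpace.comap Xu inferInstance] with hg
  have hYint : Integrable Y P := hY2.integrable one_le_two
  have hYl : ∀ l, MemLp (fun ω => Y ω l) 2 P := fun l =>
    (ContinuousLinearMap.proj (R := ℝ) (φ := fun _ : Fin k => ℝ) l).comp_memLp' hY2
  have hgl : ∀ l, MemLp (fun ω => g ω l) 2 P := by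
    intro l
    have h1 := condexp_comp_clm hm
      (ContinuousLinearMap.proj (R := ℝ) (φ := fun _ : Fin k => ℝ) l) hYint
    exact (memℒp_two_condexp hm (hYl l)).ae_eq h1
  have hgint : ∀ l, Integrable (fun ω => g ω l) P := fun l => (hgl l).integrable one_le_two
  have hcovfu : covMatrix P k fu = covMatrix P k g := by
    rw [hfu]
    exact covMatrix_sub_const hgint c
  -- isometry part
  have hOYg : P[OY | MeasurableSpace.comap Xu inferInstance] =ᵐ[P]
      fun ω => O.mulVec (g ω) := by
    rw [hOY]
    have hL := condexp_comp_clm hm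
      (LinearMap.toContinuousLinearMap (Matrix.mulVecLin O)) hYint
    simpa using hL
  have h1 : SigO.trace = (covMatrix P k Y).trace := by
    rw [hSigO, hOY]; exact trace_cov_mulVec hYl O hO
  have h2 : CuO.trace = (covMatrix P k fu).trace := by
    rw [hCuO, covMatrix_congr_ae hOYg, trace_cov_mulVec hgl O hO, hcovfu]
  -- scaling part
  have hlamg : P[lamY | MeasurableSpace.comap Xu inferInstance] =ᵐ[P]
      fun ω => lam • g ω := by
    rw [hlamY]
    have := condExp_smul (μ := P) (m := MeasurableSpace.comap Xu inferInstance) lam Y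
    exact this
  have h3 : SigLam.trace = lam ^ 2 * (covMatrix P k Y).trace := by
    rw [hSigLam, hlamY]; exact trace_cov_smul Y lam
  have h4 : CuLam.trace = lam ^ 2 * (covMatrix P k fu).trace := by
    rw [hCuLam, covMatrix_congr_ae hlamg, trace_cov_smul g lam, hcovfu]
  constructor
  · rw [h1, h2]
  · rw [h3, h4, mul_div_mul_left _ _ (pow_ne_zero 2 hlam)]
end

section
/- Identity is the only choice of weight matrix giving an isometry-invariant index: let k ≥ 2 and let M be a symmetric k×k real matrix such that for every orthogonal k×k real matrix O (Oᵀ·O = Id_k) and every pair of symmetric positive semidefinite k×k real matrices C and Σ with Σ − C positive semidefinite, one has Tr(M·O·C·Oᵀ)·Tr(M·Σ) = Tr(M·C)·Tr(M·O·Σ·Oᵀ). Then there exists λ ∈ ℝ such that M = λ·Id_k. -/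
open Matrix

private lemma aux_transpose_std {k : ℕ} (i j : Fin k) (c : ℝ) :
    (Matrix.single i j c)ᵀ = Matrix.single j i c := by
  ext a b
  simp [Matrix.single, transpose_apply, and_comm]

private lemma aux_trace_mul_std {k : ℕ} (M : Matrix (Fin k) (Fin k) ℝ) (a b : Fin k) :
    Matrix.trace (M * Matrix.single a b (1:ℝ)) = M b a := by
  classical
  rw [Matrix.trace]
  rw [Finset.sum_eq_single b]
  · simp [Matrix.diag]
  · intro c _ hc
    simp [Matrix.diag, Matrix.mul_single_apply_of_ne (hbj := hc)]
  · simp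

private lemma aux_psd_vecMulVec {k : ℕ} (x : Fin k → ℝ) : (vecMulVec x x).PosSemidef := by
  have h := Matrix.posSemidef_self_mul_conjTranspose (Matrix.replicateCol (Fin 1) x)
  rw [vecMulVec_eq (Fin 1)]
  simp only [Matrix.conjTranspose_replicateCol, star_trivial] at h
  convert h using 3 <;> rfl

private lemma aux_u_psd {k : ℕ} {i j : Fin k} (hij : i ≠ j) :
    (Matrix.single i i (1:ℝ) + Matrix.single i j 1 + Matrix.single j i 1
      + Matrix.single j j 1).PosSemidef := by
  have : Matrix.single i i (1:ℝ) + Matrix.single i j 1 + Matrix.single j i 1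
      + Matrix.single j j 1
      = vecMulVec (Pi.single i 1 + Pi.single j 1) (Pi.single i 1 + Pi.single j 1) := by
    ext a b
    by_cases hai : a = i <;> by_cases haj : a = j <;> by_cases hbi : b = i <;>
      by_cases hbj : b = j <;>
      simp_all [vecMulVec_apply, Matrix.single, Pi.single_apply, eq_comm]
  rw [this]
  exact aux_psd_vecMulVec _

private lemma aux_v_psd {k : ℕ} {i j : Fin k} (hij : i ≠ j) :
    (Matrix.single i i (1:ℝ) - Matrix.single i j 1 - Matrix.single j i 1
      + Matrix.single j j 1).PosSemidef := by
  have : Matrix.single i i (1:ℝ) - Matrix.single i j 1 - Matrix.single j i 1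
      + Matrix.single j j 1
      = vecMulVec (Pi.single i 1 - Pi.single j 1) (Pi.single i 1 - Pi.single j 1) := by
    ext a b
    by_cases hai : a = i <;> by_cases haj : a = j <;> by_cases hbi : b = i <;>
      by_cases hbj : b = j <;>
      simp_all [vecMulVec_apply, Matrix.single, Pi.single_apply, eq_comm]
  rw [this]
  exact aux_psd_vecMulVec _

private lemma aux_e_psd {k : ℕ} (i : Fin k) : (Matrix.single i i (1:ℝ)).PosSemidef := by
  rw [single_eq_single_vecMulVec_single]
  exact aux_psd_vecMulVec _

section identities

variable {k : ℕ} {i j : Fin k} {s : ℝ}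

private lemma aux_orth (hij : i ≠ j) (hs : s * s = 1/2) :
    (s • (Matrix.single i i (1:ℝ) + Matrix.single j j 1 + Matrix.single j i 1
        - Matrix.single i j 1) + (1 - Matrix.single i i 1 - Matrix.single j j 1))ᵀ *
    (s • (Matrix.single i i (1:ℝ) + Matrix.single j j 1 + Matrix.single j i 1
        - Matrix.single i j 1) + (1 - Matrix.single i i 1 - Matrix.single j j 1)) = 1 := by
  simp only [transpose_add, transpose_sub, transpose_smul, transpose_one, aux_transpose_std]
  simp only [Matrix.add_mul, Matrix.mul_add, Matrix.sub_mul, Matrix.mul_sub,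
    smul_mul_assoc, mul_smul_comm, Matrix.one_mul, Matrix.mul_one,
    single_mul_single_same, single_mul_single_of_ne _ _ _ _ hij,
    single_mul_single_of_ne _ _ _ _ hij.symm, mul_one, smul_zero, smul_smul,
    Matrix.zero_mul, Matrix.mul_zero, zero_add, add_zero, sub_zero, zero_sub, sub_self, neg_zero]
  match_scalars <;> nlinarith [hs]

private lemma aux_conj_ii (hij : i ≠ j) (hs : s * s = 1/2) :
    (s • (Matrix.single i i (1:ℝ) + Matrix.single j j 1 + Matrix.single j i 1
        - Matrix.single i j 1) + (1 - Matrix.single i i 1 - Matrix.single j j 1)) *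
    Matrix.single i i (1:ℝ) *
    (s • (Matrix.single i i (1:ℝ) + Matrix.single j j 1 + Matrix.single j i 1
        - Matrix.single i j 1) + (1 - Matrix.single i i 1 - Matrix.single j j 1))ᵀ
    = (1/2 : ℝ) • (Matrix.single i i (1:ℝ) + Matrix.single i j 1 + Matrix.single j i 1
        + Matrix.single j j 1) := by
  simp only [transpose_add, transpose_sub, transpose_smul, transpose_one, aux_transpose_std]
  simp only [Matrix.add_mul, Matrix.mul_add, Matrix.sub_mul, Matrix.mul_sub,
    smul_mul_assoc, mul_smul_comm, Matrix.one_mul, Matrix.mul_one,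
    single_mul_single_same, single_mul_single_of_ne _ _ _ _ hij,
    single_mul_single_of_ne _ _ _ _ hij.symm, mul_one, smul_zero, smul_smul,
    Matrix.zero_mul, Matrix.mul_zero, zero_add, add_zero, sub_zero, zero_sub, sub_self, neg_zero]
  match_scalars <;> nlinarith [hs]

private lemma aux_conj_jj (hij : i ≠ j) (hs : s * s = 1/2) :
    (s • (Matrix.single i i (1:ℝ) + Matrix.single j j 1 + Matrix.single j i 1
        - Matrix.single i j 1) + (1 - Matrix.single i i 1 - Matrix.single j j 1)) *
    Matrix.single j j (1:ℝ) *
    (s • (Matrix.single i i (1:ℝ) + Matrix.single j j 1 + Matrix.single j i 1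
        - Matrix.single i j 1) + (1 - Matrix.single i i 1 - Matrix.single j j 1))ᵀ
    = (1/2 : ℝ) • (Matrix.single i i (1:ℝ) - Matrix.single i j 1 - Matrix.single j i 1
        + Matrix.single j j 1) := by
  simp only [transpose_add, transpose_sub, transpose_smul, transpose_one, aux_transpose_std]
  simp only [Matrix.add_mul, Matrix.mul_add, Matrix.sub_mul, Matrix.mul_sub,
    smul_mul_assoc, mul_smul_comm, Matrix.one_mul, Matrix.mul_one,
    single_mul_single_same, single_mul_single_of_ne _ _ _ _ hij,
    single_mul_single_of_ne _ _ _ _ hij.symm, mul_one, smul_zero, smul_smul,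
    Matrix.zero_mul, Matrix.mul_zero, zero_add, add_zero, sub_zero, zero_sub, sub_self, neg_zero]
  match_scalars <;> nlinarith [hs]

private lemma aux_conj_u (hij : i ≠ j) (hs : s * s = 1/2) :
    (s • (Matrix.single i i (1:ℝ) + Matrix.single j j 1 + Matrix.single j i 1
        - Matrix.single i j 1) + (1 - Matrix.single i i 1 - Matrix.single j j 1)) *
    (Matrix.single i i (1:ℝ) + Matrix.single i j 1 + Matrix.single j i 1
        + Matrix.single j j 1) *
    (s • (Matrix.single i i (1:ℝ) + Matrix.single j j 1 + Matrix.single j i 1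
        - Matrix.single i j 1) + (1 - Matrix.single i i 1 - Matrix.single j j 1))ᵀ
    = (2 : ℝ) • Matrix.single j j (1:ℝ) := by
  simp only [transpose_add, transpose_sub, transpose_smul, transpose_one, aux_transpose_std]
  simp only [Matrix.add_mul, Matrix.mul_add, Matrix.sub_mul, Matrix.mul_sub,
    smul_mul_assoc, mul_smul_comm, Matrix.one_mul, Matrix.mul_one,
    single_mul_single_same, single_mul_single_of_ne _ _ _ _ hij,
    single_mul_single_of_ne _ _ _ _ hij.symm, mul_one, smul_zero, smul_smul,
    Matrix.zero_mul, Matrix.mul_zero, zero_add, add_zero, sub_zero, zero_sub, sub_self, neg_zero]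
  match_scalars <;> nlinarith [hs]

private lemma aux_conj_v (hij : i ≠ j) (hs : s * s = 1/2) :
    (s • (Matrix.single i i (1:ℝ) + Matrix.single j j 1 + Matrix.single j i 1
        - Matrix.single i j 1) + (1 - Matrix.single i i 1 - Matrix.single j j 1)) *
    (Matrix.single i i (1:ℝ) - Matrix.single i j 1 - Matrix.single j i 1
        + Matrix.single j j 1) *
    (s • (Matrix.single i i (1:ℝ) + Matrix.single j j 1 + Matrix.single j i 1
        - Matrix.single i j 1) + (1 - Matrix.single i i 1 - Matrix.single j j 1))ᵀ
    = (2 : ℝ) • Matrix.single i i (1:ℝ) := by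
  simp only [transpose_add, transpose_sub, transpose_smul, transpose_one, aux_transpose_std]
  simp only [Matrix.add_mul, Matrix.mul_add, Matrix.sub_mul, Matrix.mul_sub,
    smul_mul_assoc, mul_smul_comm, Matrix.one_mul, Matrix.mul_one,
    single_mul_single_same, single_mul_single_of_ne _ _ _ _ hij,
    single_mul_single_of_ne _ _ _ _ hij.symm, mul_one, smul_zero, smul_smul,
    Matrix.zero_mul, Matrix.mul_zero, zero_add, add_zero, sub_zero, zero_sub, sub_self, neg_zero]
  match_scalars <;> nlinarith [hs]

end identities

/-- **Identity is the only choice of weight matrix giving an isometry-invariant index**: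
if `M` is symmetric and `Tr(M O C Oᵀ)·Tr(M Σ) = Tr(M C)·Tr(M O Σ Oᵀ)` for all orthogonal `O`
and all symmetric positive semidefinite `C`, `Σ` with `Σ − C` positive semidefinite,
then `M` is a multiple of the identity. -/
theorem identity_only_invariant_choice
    (k : ℕ) (hk : 2 ≤ k) (M : Matrix (Fin k) (Fin k) ℝ) (hMsymm : M.IsSymm)
    (hinv : ∀ (O C Sig : Matrix (Fin k) (Fin k) ℝ), Oᵀ * O = 1 →
        C.PosSemidef → Sig.PosSemidef → (Sig - C).PosSemidef →
        Matrix.trace (M * (O * C * Oᵀ)) * Matrix.trace (M * Sig)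
          = Matrix.trace (M * C) * Matrix.trace (M * (O * Sig * Oᵀ))) :
    ∃ lam : ℝ, M = lam • (1 : Matrix (Fin k) (Fin k) ℝ) := by
  have key : ∀ i j : Fin k, i ≠ j → M i j = 0 ∧ M i i = M j j := by
    intro i j hij
    set s : ℝ := Real.sqrt (1/2) with hs_def
    have hs : s * s = 1/2 := Real.mul_self_sqrt (by norm_num)
    set O : Matrix (Fin k) (Fin k) ℝ :=
      s • (Matrix.single i i (1:ℝ) + Matrix.single j j 1 + Matrix.single j i 1
        - Matrix.single i j 1) + (1 - Matrix.single i i 1 - Matrix.single j j 1) with hO_def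
    set U : Matrix (Fin k) (Fin k) ℝ :=
      Matrix.single i i (1:ℝ) + Matrix.single i j 1 + Matrix.single j i 1
        + Matrix.single j j 1 with hU_def
    set V : Matrix (Fin k) (Fin k) ℝ :=
      Matrix.single i i (1:ℝ) - Matrix.single i j 1 - Matrix.single j i 1
        + Matrix.single j j 1 with hV_def
    have hUpsd := aux_u_psd hij
    have hVpsd := aux_v_psd hij
    have hIpsd := aux_e_psd (k := k) i
    have hJpsd := aux_e_psd (k := k) j
    have h1 := hinv O U (U + Matrix.single i i 1) (aux_orth hij hs) hUpsd
      (hUpsd.add hIpsd) (by rw [add_sub_cancel_left]; exact hIpsd)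
    have h2 := hinv O V (V + Matrix.single j j 1) (aux_orth hij hs) hVpsd
      (hVpsd.add hJpsd) (by rw [add_sub_cancel_left]; exact hJpsd)
    rw [show O * (U + Matrix.single i i 1) * Oᵀ
        = O * U * Oᵀ + O * Matrix.single i i 1 * Oᵀ by noncomm_ring] at h1
    rw [show O * (V + Matrix.single j j 1) * Oᵀ
        = O * V * Oᵀ + O * Matrix.single j j 1 * Oᵀ by noncomm_ring] at h2
    rw [aux_conj_u hij hs, aux_conj_ii hij hs] at h1
    rw [aux_conj_v hij hs, aux_conj_jj hij hs] at h2
    rw [hU_def] at h1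
    rw [hV_def] at h2
    simp only [Matrix.mul_add, Matrix.mul_sub, mul_smul_comm, trace_add, trace_sub,
      trace_smul, aux_trace_mul_std, smul_eq_mul] at h1 h2
    have hji : M j i = M i j := hMsymm.apply i j
    rw [hji] at h1 h2
    have e1 : 4 * (M i i * M j j) = (M i i + M j j + 2 * M i j)^2 := by nlinarith [h1]
    have e2 : 4 * (M i i * M j j) = (M i i + M j j - 2 * M i j)^2 := by nlinarith [h2]
    have ht2 : (M i j)^2 = 0 := by nlinarith [e1, e2, sq_nonneg (M i i - M j j)]
    have ht : M i j = 0 := by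
      have := sq_eq_zero_iff.mp ht2
      exact this
    refine ⟨ht, ?_⟩
    have : (M i i - M j j)^2 = 0 := by nlinarith [e1, e2, ht]
    have := sq_eq_zero_iff.mp this
    linarith
  refine ⟨M ⟨0, by omega⟩ ⟨0, by omega⟩, ?_⟩
  ext a b
  by_cases hab : a = b
  · subst hab
    by_cases h0 : a = ⟨0, by omega⟩
    · subst h0; simp
    · have := (key a ⟨0, by omega⟩ h0).2
      simp [this, Matrix.one_apply]
  · have := (key a b hab).1
    simp [this, Matrix.one_apply, hab]
end

section
/- The Sobol matricial index T^{u,μ} is invariant by isometry: let Σ, C be k×k real matrices with Σ invertible, let U and O be k×k real matrices with U orthogonal (Uᵀ·U = Id_k), and let (w_P)_{P ∈ H_k} be nonnegative weights summing to 1 indexed by the finite set H_k of signed permutation matrices of size k. Then (1/2)·∑_{P ∈ H_k} w_P·(U·O·P)ᵀ·((U·Σ·Uᵀ)⁻¹·(U·C·Uᵀ) + (U·C·Uᵀ)·(U·Σ·Uᵀ)⁻¹)·(U·O·P) = (1/2)·∑_{P ∈ H_k} w_P·(O·P)ᵀ·(Σ⁻¹·C + C·Σ⁻¹)·(O·P).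 -/
open Matrix

/-- A signed permutation matrix: every row and every column has exactly one nonzero entry,
and every nonzero entry equals `1` or `−1`. -/
def IsSignedPermMatrix {k : ℕ} (Q : Matrix (Fin k) (Fin k) ℝ) : Prop :=
  (∀ i, ∃! j, Q i j ≠ 0) ∧ (∀ j, ∃! i, Q i j ≠ 0) ∧
    ∀ i j, Q i j ≠ 0 → Q i j = 1 ∨ Q i j = -1

/-- **The Sobol matricial index `T^{u,μ}` is invariant by isometry.** -/
theorem sobol_matricial_index_isometry_invariant
    (k : ℕ) (hk : 1 ≤ k)
    (Sig C U O : Matrix (Fin k) (Fin k) ℝ)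
    (hSig : IsUnit Sig.det) (hU : Uᵀ * U = 1)
    (H : Finset (Matrix (Fin k) (Fin k) ℝ))
    (hH : ∀ Q : Matrix (Fin k) (Fin k) ℝ, Q ∈ H ↔ IsSignedPermMatrix Q)
    (w : Matrix (Fin k) (Fin k) ℝ → ℝ)
    (hw : ∀ Q ∈ H, 0 ≤ w Q) (hwsum : ∑ Q ∈ H, w Q = 1) :
    (1 / 2 : ℝ) • ∑ Q ∈ H, w Q •
        ((U * O * Q)ᵀ * ((U * Sig * Uᵀ)⁻¹ * (U * C * Uᵀ) + (U * C * Uᵀ) * (U * Sig * Uᵀ)⁻¹)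
          * (U * O * Q))
      = (1 / 2 : ℝ) • ∑ Q ∈ H, w Q •
        ((O * Q)ᵀ * (Sig⁻¹ * C + C * Sig⁻¹) * (O * Q)) := by
  have hU' : U * Uᵀ = 1 := mul_eq_one_comm.mp hU
  have hUinv : U⁻¹ = Uᵀ := Matrix.inv_eq_left_inv hU
  have hUTinv : Uᵀ⁻¹ = U := Matrix.inv_eq_left_inv hU'
  have hinv : (U * Sig * Uᵀ)⁻¹ = U * Sig⁻¹ * Uᵀ := by
    rw [Matrix.mul_inv_rev, Matrix.mul_inv_rev, hUinv, hUTinv, Matrix.mul_assoc]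
  have cancel : ∀ X : Matrix (Fin k) (Fin k) ℝ, Uᵀ * (U * X) = X := fun X => by
    rw [← Matrix.mul_assoc, hU, Matrix.one_mul]
  congr 1
  refine Finset.sum_congr rfl fun Q _ => ?_
  congr 1
  rw [hinv]
  simp only [Matrix.transpose_mul, Matrix.add_mul, Matrix.mul_add, Matrix.mul_assoc, cancel]
end

section
/- Decomposition of the truncated empirical variance statistic: D_{N,m}(T) − 𝔼‖T‖² + ‖𝔼T‖² = −U_N K(T) + P_N L(T) − B_m(T) holds almost surely (pointwise on Ω), where U_N K(T) = ∑_{l=1}^m (1/N²)·∑_{1≤i≠j≤N} Z_{i,l}·Z_{j,l}, P_N L(T) = (1/N)·(1 − 1/N)·∑_{l=1}^m ∑_{i=1}^N (W_{i,l} − 2·e_l·Z_{i,l}), and B_m(T) = ∑_{l>m} (v_l − e_l²) + (1/N)·∑_{l=1}^m (v_l − e_l²); here U_N K(T) is a totally degenerate U-statistic of order 2, P_N L(T) is a centered linear term and B_m(T) is deterministic. -/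
open MeasureTheory ProbabilityTheory
open scoped RealInnerProductSpace

private lemma sum_erase_mul_eq {s : Finset ℕ} (f : ℕ → ℝ) :
    ∑ i ∈ s, ∑ j ∈ s.erase i, f i * f j
      = (∑ i ∈ s, f i) ^ 2 - ∑ i ∈ s, f i ^ 2 := by
  have h : ∀ i ∈ s, ∑ j ∈ s.erase i, f i * f j
      = f i * (∑ j ∈ s, f j) - f i ^ 2 := by
    intro i hi
    rw [← Finset.mul_sum, Finset.sum_erase_eq_sub hi]; ring
  rw [Finset.sum_congr rfl h, Finset.sum_sub_distrib, ← Finset.sum_mul, sq]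

/-- **Decomposition of the truncated empirical variance statistic**:
`D_{N,m}(T) − 𝔼‖T‖² + ‖𝔼T‖² = −U_N K(T) + P_N L(T) − B_m(T)` pointwise on `Ω`
(indices are `0`-based: the first `m` coordinates are `l ∈ Finset.range m` and the
remaining ones are `m + j`, `j : ℕ`). -/
theorem truncated_empirical_variance_decomposition
    {H : Type*} [NormedAddCommGroup H] [InnerProductSpace ℝ H] [CompleteSpace H]
    [MeasurableSpace H] [BorelSpace H]
    {Ω : Type*} [MeasurableSpace Ω] (P : Measure Ω) [IsProbabilityMeasure P]
    (φ : HilbertBasis ℕ ℝ H)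
    (T : Ω → H) (hT : MemLp T 2 P)
    (N m : ℕ) (hN : 1 ≤ N) (hm : 1 ≤ m)
    (Ti : ℕ → Ω → H) (hTi : ∀ i, IdentDistrib (Ti i) T P P)
    (e v : ℕ → ℝ)
    (he : e = fun l => ∫ ω, ⟪T ω, φ l⟫ ∂P)
    (hv : v = fun l => ∫ ω, ⟪T ω, φ l⟫ ^ 2 ∂P)
    (Z W : ℕ → ℕ → Ω → ℝ)
    (hZ : Z = fun i l ω => ⟪Ti i ω, φ l⟫ - e l)
    (hW : W = fun i l ω => ⟪Ti i ω, φ l⟫ ^ 2 - v l)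
    (D UNK PNL : Ω → ℝ) (B : ℝ)
    (hD : D = fun ω => (1 / N : ℝ) * (∑ i ∈ Finset.range N, ∑ l ∈ Finset.range m,
        ⟪Ti i ω, φ l⟫ ^ 2)
      - ∑ l ∈ Finset.range m, ⟪(N : ℝ)⁻¹ • ∑ i ∈ Finset.range N, Ti i ω, φ l⟫ ^ 2)
    (hUNK : UNK = fun ω => ∑ l ∈ Finset.range m, (1 / (N : ℝ) ^ 2) *
        ∑ i ∈ Finset.range N, ∑ j ∈ (Finset.range N).erase i, Z i l ω * Z j l ω)
    (hPNL : PNL = fun ω => (1 / N : ℝ) * (1 - 1 / N) *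
        ∑ l ∈ Finset.range m, ∑ i ∈ Finset.range N, (W i l ω - 2 * e l * Z i l ω))
    (hB : B = (∑' j : ℕ, (v (m + j) - e (m + j) ^ 2))
      + (1 / N : ℝ) * ∑ l ∈ Finset.range m, (v l - e l ^ 2)) :
    ∀ ω, D ω - (∫ x, ‖T x‖ ^ 2 ∂P) + ‖∫ x, T x ∂P‖ ^ 2 = -UNK ω + PNL ω - B := by
  subst hZ hW hD hUNK hPNL hB
  have hc : (N : ℝ) ≠ 0 := by positivity
  -- pointwise Parseval
  have hpar : ∀ x : H, HasSum (fun l => ⟪x, φ l⟫ ^ 2) (‖x‖ ^ 2) := by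
    intro x
    have := φ.hasSum_inner_mul_inner x x
    have h0 : ⟪x, x⟫ = ‖x‖ ^ 2 := real_inner_self_eq_norm_sq x
    simpa [real_inner_comm x, ← sq, h0] using this
  -- integrability
  have hTint : Integrable T P := hT.integrable one_le_two
  have hT2 : Integrable (fun x => ‖T x‖ ^ 2) P := hT.norm.integrable_sq
  have hinner : ∀ l, MemLp (fun ω => ⟪T ω, φ l⟫) 2 P :=
    fun l => MemLp.inner_const (𝕜 := ℝ) hT (φ l)
  have hinner2 : ∀ l, Integrable (fun ω => ⟪T ω, φ l⟫ ^ 2) P :=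
    fun l => (hinner l).integrable_sq
  -- e l is the l-th coefficient of the mean
  have hel : ∀ l, e l = ⟪∫ x, T x ∂P, φ l⟫ := by
    intro l
    rw [he, real_inner_comm, ← integral_inner hTint (φ l)]
    simp [real_inner_comm]
  -- summability of e^2 and the norm formula
  have heHS : HasSum (fun l => e l ^ 2) (‖∫ x, T x ∂P‖ ^ 2) := by
    have := hpar (∫ x, T x ∂P)
    convert this using 2 with l
    rw [hel l]
  have hesum : Summable fun l => e l ^ 2 := heHS.summable
  have hnorm2 : ‖∫ x, T x ∂P‖ ^ 2 = ∑' l, e l ^ 2 := heHS.tsum_eq.symm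
  -- summability of v
  have hvnn : ∀ l, 0 ≤ v l := by
    intro l; rw [hv]; exact integral_nonneg fun x => sq_nonneg _
  have hvsum : Summable v := by
    apply summable_of_sum_range_le hvnn (c := ∫ x, ‖T x‖ ^ 2 ∂P)
    intro n
    have : ∑ l ∈ Finset.range n, v l
        = ∫ x, ∑ l ∈ Finset.range n, ⟪T x, φ l⟫ ^ 2 ∂P := by
      rw [hv, integral_finset_sum _ fun l _ => hinner2 l]
    rw [this]
    refine integral_mono (integrable_finset_sum _ fun l _ => hinner2 l) hT2 fun x => ?_
    exact le_trans (Summable.sum_le_tsum _ (fun l _ => sq_nonneg _) (hpar (T x)).summable)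
      (le_of_eq (hpar (T x)).tsum_eq)
  -- integral of the squared norm
  have hint2 : (∫ x, ‖T x‖ ^ 2 ∂P) = ∑' l, v l := by
    rw [hv]
    rw [integral_tsum_of_summable_integral_norm (fun l => hinner2 l) ?_]
    · exact integral_congr_ae (Filter.Eventually.of_forall fun x => ((hpar (T x)).tsum_eq).symm)
    · have : (fun l => ∫ a, ‖⟪T a, φ l⟫ ^ 2‖ ∂P) = fun l => ∫ a, ⟪T a, φ l⟫ ^ 2 ∂P := by
        funext l
        exact integral_congr_ae (Filter.Eventually.of_forall fun a =>
          Real.norm_of_nonneg (sq_nonneg _))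
      rw [this, ← hv]
      exact hvsum
  -- summable difference and the split of the tail
  have hgsum : Summable fun l => v l - e l ^ 2 := hvsum.sub hesum
  have hsplit : ∑ l ∈ Finset.range m, (v l - e l ^ 2)
      + ∑' j : ℕ, (v (m + j) - e (m + j) ^ 2)
      = ∑' l, (v l - e l ^ 2) := by
    simpa [add_comm _ m] using Summable.sum_add_tsum_nat_add m hgsum
  have key : (∫ x, ‖T x‖ ^ 2 ∂P) - ‖∫ x, T x ∂P‖ ^ 2
      = ∑ l ∈ Finset.range m, (v l - e l ^ 2)
        + ∑' j : ℕ, (v (m + j) - e (m + j) ^ 2) := by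
    rw [hint2, hnorm2, hsplit, Summable.tsum_sub hvsum hesum]
  -- main algebraic identity (pointwise, per coordinate)
  intro ω
  have perl : ∀ l ∈ Finset.range m,
      (1 / N : ℝ) * (∑ i ∈ Finset.range N, ⟪Ti i ω, φ l⟫ ^ 2)
        - ((N : ℝ)⁻¹ * ∑ i ∈ Finset.range N, ⟪Ti i ω, φ l⟫) ^ 2 - (v l - e l ^ 2)
      = -((1 / (N : ℝ) ^ 2) * ∑ i ∈ Finset.range N, ∑ j ∈ (Finset.range N).erase i,
            (⟪Ti i ω, φ l⟫ - e l) * (⟪Ti j ω, φ l⟫ - e l))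
        + (1 / N : ℝ) * (1 - 1 / N) * ∑ i ∈ Finset.range N,
            ((⟪Ti i ω, φ l⟫ ^ 2 - v l) - 2 * e l * (⟪Ti i ω, φ l⟫ - e l))
        - (1 / N : ℝ) * (v l - e l ^ 2) := by
    intro l _
    rw [sum_erase_mul_eq (fun i => ⟪Ti i ω, φ l⟫ - e l)]
    have h1 : ∑ i ∈ Finset.range N, (⟪Ti i ω, φ l⟫ - e l)
        = (∑ i ∈ Finset.range N, ⟪Ti i ω, φ l⟫) - N * e l := by
      rw [Finset.sum_sub_distrib, Finset.sum_const, Finset.card_range]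
      simp [mul_comm]
    have h2 : ∑ i ∈ Finset.range N, (⟪Ti i ω, φ l⟫ - e l) ^ 2
        = (∑ i ∈ Finset.range N, ⟪Ti i ω, φ l⟫ ^ 2)
          - 2 * e l * (∑ i ∈ Finset.range N, ⟪Ti i ω, φ l⟫) + N * e l ^ 2 := by
      have : ∀ i ∈ Finset.range N, (⟪Ti i ω, φ l⟫ - e l) ^ 2
          = ⟪Ti i ω, φ l⟫ ^ 2 - 2 * e l * ⟪Ti i ω, φ l⟫ + e l ^ 2 := fun i _ => by ring
      rw [Finset.sum_congr rfl this, Finset.sum_add_distrib, Finset.sum_sub_distrib,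
        ← Finset.mul_sum, Finset.sum_const, Finset.card_range]
      simp [mul_comm]
    have h3 : ∑ i ∈ Finset.range N,
          ((⟪Ti i ω, φ l⟫ ^ 2 - v l) - 2 * e l * (⟪Ti i ω, φ l⟫ - e l))
        = (∑ i ∈ Finset.range N, ⟪Ti i ω, φ l⟫ ^ 2) - N * v l
          - 2 * e l * (∑ i ∈ Finset.range N, ⟪Ti i ω, φ l⟫) + 2 * N * e l ^ 2 := by
      have : ∀ i ∈ Finset.range N,
          ((⟪Ti i ω, φ l⟫ ^ 2 - v l) - 2 * e l * (⟪Ti i ω, φ l⟫ - e l))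
          = (⟪Ti i ω, φ l⟫ ^ 2 - v l) - 2 * e l * ⟪Ti i ω, φ l⟫ + 2 * e l ^ 2 :=
        fun i _ => by ring
      rw [Finset.sum_congr rfl this, Finset.sum_add_distrib, Finset.sum_sub_distrib,
        Finset.sum_sub_distrib, ← Finset.mul_sum, Finset.sum_const, Finset.sum_const,
        Finset.card_range]
      simp [mul_comm]
      ring
    rw [h1, h2, h3]
    field_simp
    ring
  have hsinner : ∀ l ∈ Finset.range m,
      ⟪(N : ℝ)⁻¹ • ∑ i ∈ Finset.range N, Ti i ω, φ l⟫ ^ 2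
      = ((N : ℝ)⁻¹ * ∑ i ∈ Finset.range N, ⟪Ti i ω, φ l⟫) ^ 2 := by
    intro l _
    rw [real_inner_smul_left, sum_inner]
  have halg : (1 / N : ℝ) * (∑ i ∈ Finset.range N, ∑ l ∈ Finset.range m,
        ⟪Ti i ω, φ l⟫ ^ 2)
      - ∑ l ∈ Finset.range m, ⟪(N : ℝ)⁻¹ • ∑ i ∈ Finset.range N, Ti i ω, φ l⟫ ^ 2
      - ∑ l ∈ Finset.range m, (v l - e l ^ 2)
      = -(∑ l ∈ Finset.range m, (1 / (N : ℝ) ^ 2) *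
          ∑ i ∈ Finset.range N, ∑ j ∈ (Finset.range N).erase i,
            (⟪Ti i ω, φ l⟫ - e l) * (⟪Ti j ω, φ l⟫ - e l))
        + (1 / N : ℝ) * (1 - 1 / N) * ∑ l ∈ Finset.range m, ∑ i ∈ Finset.range N,
            ((⟪Ti i ω, φ l⟫ ^ 2 - v l) - 2 * e l * (⟪Ti i ω, φ l⟫ - e l))
        - (1 / N : ℝ) * ∑ l ∈ Finset.range m, (v l - e l ^ 2) := by
    rw [Finset.sum_comm, Finset.mul_sum, Finset.sum_congr rfl hsinner]
    calc _ = ∑ l ∈ Finset.range m,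
          ((1 / N : ℝ) * (∑ i ∈ Finset.range N, ⟪Ti i ω, φ l⟫ ^ 2)
            - ((N : ℝ)⁻¹ * ∑ i ∈ Finset.range N, ⟪Ti i ω, φ l⟫) ^ 2
            - (v l - e l ^ 2)) := by
          simp [Finset.sum_sub_distrib]
      _ = _ := by
          rw [Finset.sum_congr rfl perl, Finset.sum_sub_distrib, Finset.sum_add_distrib,
            Finset.sum_neg_distrib, ← Finset.mul_sum, ← Finset.mul_sum]
          congr 1
          rw [Finset.mul_sum]
  beta_reduce
  linarith [key, halg]
end

section
/- Second-moment bound for the degenerate U-statistic: 𝔼[(∑_{l=1}^m (1/N²)·∑_{1≤i≠j≤N} Z_{i,l}·Z_{j,l})²] = (2/N²)·(1 − 1/N)·∑_{l,k=1}^m (𝔼[Z_{1,l}·Z_{1,k}])², and this quantity is at most (2/N²)·(1 − 1/N)·(∑_{l=1}^m v_l)². -/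
open MeasureTheory ProbabilityTheory

section Aux
set_option linter.unusedSectionVars false
variable {Ω : Type*} [MeasurableSpace Ω] {P : Measure Ω} [IsProbabilityMeasure P]
  {m : ℕ} {Z : ℕ → Ω → Fin m → ℝ}

lemma mulL2 {f g : Ω → ℝ} (hf : MemLp f 2 P) (hg : MemLp g 2 P) :
    Integrable (fun ω => f ω * g ω) P := by
  have h := hf.smul (φ := g) hg (r := 1) (hpqr := ⟨by rw [ENNReal.inv_two_add_inv_two, inv_one]⟩)
  rw [memLp_one_iff_integrable] at h
  exact (by simpa [smul_eq_mul, mul_comm] using h : Integrable (f * g) P)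

variable (hL2 : MemLp (Z 0) 2 P) (hidist : ∀ i, IdentDistrib (Z i) (Z 0) P P)
  (hcentered : ∀ l, ∫ ω, Z 0 ω l ∂P = 0)
include hL2 hidist hcentered

lemma coordL2 (a : ℕ) (l : Fin m) : MemLp (fun ω => Z a ω l) 2 P := by
  have h0 : MemLp (fun ω => Z 0 ω l) 2 P :=
    (ContinuousLinearMap.proj (R := ℝ) (φ := fun _ : Fin m => ℝ) l).comp_memLp' hL2
  exact (((hidist a).comp (measurable_pi_apply l)).memLp_iff).mpr h0

lemma coordInt (a : ℕ) (l : Fin m) : Integrable (fun ω => Z a ω l) P :=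
  (coordL2 hL2 hidist hcentered a l).integrable one_le_two

lemma coordMean (a : ℕ) (l : Fin m) : ∫ ω, Z a ω l ∂P = 0 := by
  have h := ((hidist a).comp (measurable_pi_apply l)).integral_eq
  exact h.trans (hcentered l)

lemma pairInt (a : ℕ) (l k : Fin m) : Integrable (fun ω => Z a ω l * Z a ω k) P :=
  mulL2 (coordL2 hL2 hidist hcentered a l) (coordL2 hL2 hidist hcentered a k)

lemma pairMean (a : ℕ) (l k : Fin m) :
    ∫ ω, Z a ω l * Z a ω k ∂P = ∫ ω, Z 0 ω l * Z 0 ω k ∂P :=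
  ((hidist a).comp ((measurable_pi_apply l).mul (measurable_pi_apply k))).integral_eq

variable (hmeas : ∀ i, Measurable (Z i))
  (hindep : iIndepFun Z P)
include hmeas hindep

lemma sep2 {a b : ℕ} (hab : a ≠ b) {φ ψ : (Fin m → ℝ) → ℝ}
    (hφ : Measurable φ) (hψ : Measurable ψ)
    (h1 : Integrable (fun ω => φ (Z a ω)) P) (h2 : Integrable (fun ω => ψ (Z b ω)) P) :
    Integrable (fun ω => φ (Z a ω) * ψ (Z b ω)) P ∧
      ∫ ω, φ (Z a ω) * ψ (Z b ω) ∂P = (∫ ω, φ (Z a ω) ∂P) * ∫ ω, ψ (Z b ω) ∂P := by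
  have hI : IndepFun (fun ω => φ (Z a ω)) (fun ω => ψ (Z b ω)) P :=
    (hindep.indepFun hab).comp hφ hψ
  exact ⟨hI.integrable_mul h1 h2, hI.integral_fun_mul_eq_mul_integral h1.1 h2.1⟩

lemma zero3 {a b c : ℕ} (hab : a ≠ b) (hac : a ≠ c) (hbc : b ≠ c) (l k u : Fin m) :
    Integrable (fun ω => Z a ω l * Z a ω k * Z b ω k * Z c ω u) P ∧
      ∫ ω, Z a ω l * Z a ω k * Z b ω k * Z c ω u ∂P = 0 := by
  have hG := sep2 hL2 hidist hcentered hmeas hindep hab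
    (φ := fun x => x l * x k) (ψ := fun y => y k)
    ((measurable_pi_apply l).mul (measurable_pi_apply k)) (measurable_pi_apply k)
    (pairInt hL2 hidist hcentered a l k) (coordInt hL2 hidist hcentered b k)
  have hI : IndepFun (fun ω => Z a ω l * Z a ω k * Z b ω k) (fun ω => Z c ω u) P := by
    have := (hindep.indepFun_prodMk hmeas a b c hac hbc).comp
      (φ := fun pr : (Fin m → ℝ) × (Fin m → ℝ) => pr.1 l * pr.1 k * pr.2 k)
      (ψ := fun y : Fin m → ℝ => y u)
      (_mγ' := Real.measurableSpace) (by fun_prop) (measurable_pi_apply u)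
    exact this
  have hc := coordInt hL2 hidist hcentered c u
  refine ⟨hI.integrable_mul hG.1 hc, ?_⟩
  have h : ∫ ω, Z a ω l * Z a ω k * Z b ω k * Z c ω u ∂P
      = (∫ ω, Z a ω l * Z a ω k * Z b ω k ∂P) * ∫ ω, Z c ω u ∂P :=
    hI.integral_fun_mul_eq_mul_integral hG.1.1 hc.1
  rw [h, coordMean hL2 hidist hcentered, mul_zero]

lemma zero4 {i j p q : ℕ} (hij : i ≠ j) (hip : i ≠ p) (hiq : i ≠ q)
    (hjp : j ≠ p) (hjq : j ≠ q) (hpq : p ≠ q) (l k : Fin m) :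
    Integrable (fun ω => Z i ω l * Z j ω l * Z p ω k * Z q ω k) P ∧
      ∫ ω, Z i ω l * Z j ω l * Z p ω k * Z q ω k ∂P = 0 := by
  have hX := sep2 hL2 hidist hcentered hmeas hindep hij
    (φ := fun x => x l) (ψ := fun y => y l)
    (measurable_pi_apply l) (measurable_pi_apply l)
    (coordInt hL2 hidist hcentered i l) (coordInt hL2 hidist hcentered j l)
  have hY := sep2 hL2 hidist hcentered hmeas hindep hpq
    (φ := fun x => x k) (ψ := fun y => y k)
    (measurable_pi_apply k) (measurable_pi_apply k)
    (coordInt hL2 hidist hcentered p k) (coordInt hL2 hidist hcentered q k)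
  have hI : IndepFun (fun ω => Z i ω l * Z j ω l) (fun ω => Z p ω k * Z q ω k) P := by
    have := (hindep.indepFun_prodMk_prodMk hmeas i j p q hip hiq hjp hjq).comp
      (φ := fun pr : (Fin m → ℝ) × (Fin m → ℝ) => pr.1 l * pr.2 l)
      (ψ := fun pr : (Fin m → ℝ) × (Fin m → ℝ) => pr.1 k * pr.2 k)
      (by fun_prop) (by fun_prop)
    exact this
  have hfn : (fun ω => Z i ω l * Z j ω l * Z p ω k * Z q ω k)
      = fun ω => (Z i ω l * Z j ω l) * (Z p ω k * Z q ω k) := by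
    funext ω; ring
  rw [hfn]
  refine ⟨hI.integrable_mul hX.1 hY.1, ?_⟩
  have h : ∫ ω, (Z i ω l * Z j ω l) * (Z p ω k * Z q ω k) ∂P
      = (∫ ω, Z i ω l * Z j ω l ∂P) * ∫ ω, Z p ω k * Z q ω k ∂P :=
    hI.integral_fun_mul_eq_mul_integral hX.1.1 hY.1.1
  rw [h, hX.2, coordMean hL2 hidist hcentered i l, zero_mul, zero_mul]

lemma quad {i j p q : ℕ} (hij : i ≠ j) (hpq : p ≠ q) (l k : Fin m) :
    Integrable (fun ω => Z i ω l * Z j ω l * Z p ω k * Z q ω k) P ∧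
      ∫ ω, Z i ω l * Z j ω l * Z p ω k * Z q ω k ∂P =
        (if (i = p ∧ j = q) ∨ (i = q ∧ j = p)
          then (∫ ω, Z 0 ω l * Z 0 ω k ∂P) ^ 2 else 0) := by
  have hsame : ∀ {a b : ℕ}, a ≠ b →
      Integrable (fun ω => (Z a ω l * Z a ω k) * (Z b ω l * Z b ω k)) P ∧
      ∫ ω, (Z a ω l * Z a ω k) * (Z b ω l * Z b ω k) ∂P
        = (∫ ω, Z 0 ω l * Z 0 ω k ∂P) ^ 2 := by
    intro a b hab
    have h := sep2 hL2 hidist hcentered hmeas hindep hab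
      (φ := fun x => x l * x k) (ψ := fun y => y l * y k)
      (by fun_prop) (by fun_prop)
      (pairInt hL2 hidist hcentered a l k) (pairInt hL2 hidist hcentered b l k)
    refine ⟨h.1, ?_⟩
    have h2 := h.2
    rw [h2, pairMean hL2 hidist hcentered a l k, pairMean hL2 hidist hcentered b l k, sq]
  by_cases hip : i = p
  · subst hip
    by_cases hjq : j = q
    · subst hjq
      rw [if_pos (Or.inl ⟨rfl, rfl⟩)]
      have hfn : (fun ω => Z i ω l * Z j ω l * Z i ω k * Z j ω k)
          = fun ω => (Z i ω l * Z i ω k) * (Z j ω l * Z j ω k) := by funext ω; ring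
      rw [hfn]; exact hsame hij
    · rw [if_neg (by rintro (⟨-, h⟩ | ⟨h, -⟩); exact hjq h; exact hpq h)]
      have hfn : (fun ω => Z i ω l * Z j ω l * Z i ω k * Z q ω k)
          = fun ω => Z i ω l * Z i ω k * Z q ω k * Z j ω l := by funext ω; ring
      rw [hfn]
      exact zero3 hL2 hidist hcentered hmeas hindep hpq hij (fun h => hjq h.symm) l k l
  · by_cases hiq : i = q
    · subst hiq
      by_cases hjp : j = p
      · subst hjp
        rw [if_pos (Or.inr ⟨rfl, rfl⟩)]
        have hfn : (fun ω => Z i ω l * Z j ω l * Z j ω k * Z i ω k)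
            = fun ω => (Z i ω l * Z i ω k) * (Z j ω l * Z j ω k) := by funext ω; ring
        rw [hfn]; exact hsame hij
      · rw [if_neg (by rintro (⟨h, -⟩ | ⟨-, h⟩); exact hip h; exact hjp h)]
        have hfn : (fun ω => Z i ω l * Z j ω l * Z p ω k * Z i ω k)
            = fun ω => Z i ω l * Z i ω k * Z p ω k * Z j ω l := by funext ω; ring
        rw [hfn]
        exact zero3 hL2 hidist hcentered hmeas hindep (fun h => hpq h.symm) hij
          (fun h => hjp h.symm) l k l
    · rw [if_neg (by rintro (⟨h, -⟩ | ⟨h, -⟩); exact hip h; exact hiq h)]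
      by_cases hjp : j = p
      · subst hjp
        have hfn : (fun ω => Z i ω l * Z j ω l * Z j ω k * Z q ω k)
            = fun ω => Z j ω l * Z j ω k * Z q ω k * Z i ω l := by funext ω; ring
        rw [hfn]
        exact zero3 hL2 hidist hcentered hmeas hindep hpq (fun h => hij h.symm)
          (fun h => hiq h.symm) l k l
      · by_cases hjq : j = q
        · subst hjq
          have hfn : (fun ω => Z i ω l * Z j ω l * Z p ω k * Z j ω k)
              = fun ω => Z j ω l * Z j ω k * Z p ω k * Z i ω l := by funext ω; ring
          rw [hfn]
          exact zero3 hL2 hidist hcentered hmeas hindep (fun h => hpq h.symm)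
            (fun h => hij h.symm) (fun h => hip h.symm) l k l
        · exact zero4 hL2 hidist hcentered hmeas hindep hij hip hiq hjp hjq hpq l k
end Aux

lemma cs_integral {Ω : Type*} [MeasurableSpace Ω] (P : Measure Ω) {f g : Ω → ℝ}
    (hf : MemLp f 2 P) (hg : MemLp g 2 P) :
    (∫ ω, f ω * g ω ∂P) ^ 2 ≤ (∫ ω, f ω ^ 2 ∂P) * (∫ ω, g ω ^ 2 ∂P) := by
  have key : ∀ (u w : Ω → ℝ) (h1 : MemLp u 2 P) (h2 : MemLp w 2 P),
      (inner ℝ (h1.toLp u) (h2.toLp w) : ℝ) = ∫ ω, u ω * w ω ∂P := by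
    intro u w h1 h2
    rw [L2.inner_def]
    refine integral_congr_ae ?_
    filter_upwards [h1.coeFn_toLp, h2.coeFn_toLp] with ω h1' h2'
    simp [h1', h2', RCLike.inner_apply, mul_comm]
  have h := real_inner_mul_inner_self_le (hf.toLp f) (hg.toLp g)
  rw [key f g hf hg, key f f hf hf, key g g hg hg] at h
  simpa [pow_two] using h

/-- **Second-moment bound for the degenerate U-statistic**:
`𝔼[(∑_{l<m} (1/N²) ∑_{i≠j} Z_{i,l} Z_{j,l})²]
  = (2/N²)(1 − 1/N) ∑_{l,k<m} (𝔼[Z_{1,l} Z_{1,k}])²`, which is at most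
`(2/N²)(1 − 1/N) (∑_{l<m} v_l)²`. -/
theorem degenerate_ustat_second_moment
    {Ω : Type*} [MeasurableSpace Ω] (P : Measure Ω) [IsProbabilityMeasure P]
    (N m : ℕ) (hN : 1 ≤ N) (hm : 1 ≤ m)
    (Z : ℕ → Ω → Fin m → ℝ)
    (hmeas : ∀ i, Measurable (Z i))
    (hindep : iIndepFun Z P)
    (hidist : ∀ i, IdentDistrib (Z i) (Z 0) P P)
    (hL2 : MemLp (Z 0) 2 P)
    (hcentered : ∀ l, ∫ ω, Z 0 ω l ∂P = 0)
    (v : Fin m → ℝ) (hv : ∀ l, 0 ≤ v l)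
    (hvar : ∀ l, ∫ ω, (Z 0 ω l) ^ 2 ∂P ≤ v l) :
    (∫ ω, (∑ l : Fin m, (1 / (N : ℝ) ^ 2) *
        ∑ i ∈ Finset.range N, ∑ j ∈ (Finset.range N).erase i, Z i ω l * Z j ω l) ^ 2 ∂P)
      = (2 / (N : ℝ) ^ 2) * (1 - 1 / N) *
          ∑ l : Fin m, ∑ k : Fin m, (∫ ω, Z 0 ω l * Z 0 ω k ∂P) ^ 2
    ∧ (2 / (N : ℝ) ^ 2) * (1 - 1 / N) *
          ∑ l : Fin m, ∑ k : Fin m, (∫ ω, Z 0 ω l * Z 0 ω k ∂P) ^ 2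
        ≤ (2 / (N : ℝ) ^ 2) * (1 - 1 / N) * (∑ l : Fin m, v l) ^ 2 := by
  have hN0 : (0 : ℝ) < (N : ℝ) := by exact_mod_cast Nat.lt_of_lt_of_le Nat.zero_lt_one hN
  set rN := Finset.range N with hrN
  set c2 : Fin m → Fin m → ℝ := fun l k => (∫ ω, Z 0 ω l * Z 0 ω k ∂P) ^ 2 with hc2
  constructor
  · -- the equality
    have hquad : ∀ (l k : Fin m) (i j p q : ℕ), i ≠ j → p ≠ q →
        Integrable (fun ω => Z i ω l * Z j ω l * Z p ω k * Z q ω k) P ∧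
        ∫ ω, Z i ω l * Z j ω l * Z p ω k * Z q ω k ∂P =
          (if (i = p ∧ j = q) ∨ (i = q ∧ j = p) then c2 l k else 0) :=
      fun l k i j p q hij hpq => quad hL2 hidist hcentered hmeas hindep hij hpq l k
    have hA : ∀ ω : Ω, (∑ l : Fin m, (1 / (N : ℝ) ^ 2) *
          ∑ i ∈ rN, ∑ j ∈ rN.erase i, Z i ω l * Z j ω l) ^ 2
        = (1 / (N : ℝ) ^ 2) ^ 2 * ∑ l : Fin m, ∑ k : Fin m, ∑ i ∈ rN, ∑ p ∈ rN,
            ∑ j ∈ rN.erase i, ∑ q ∈ rN.erase p,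
              Z i ω l * Z j ω l * Z p ω k * Z q ω k := by
      intro ω
      rw [← Finset.mul_sum, mul_pow]
      congr 1
      rw [sq, Finset.sum_mul_sum]
      refine Finset.sum_congr rfl fun l _ => Finset.sum_congr rfl fun k _ => ?_
      rw [Finset.sum_mul_sum]
      refine Finset.sum_congr rfl fun i _ => Finset.sum_congr rfl fun p _ => ?_
      rw [Finset.sum_mul_sum]
      refine Finset.sum_congr rfl fun j _ => Finset.sum_congr rfl fun q _ => ?_
      ring
    have hTint : ∀ (l k : Fin m), ∀ i ∈ rN, ∀ p ∈ rN, ∀ j ∈ rN.erase i, ∀ q ∈ rN.erase p,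
        Integrable (fun ω => Z i ω l * Z j ω l * Z p ω k * Z q ω k) P := by
      intro l k i _ p _ j hj q hq
      exact (hquad l k i j p q (Finset.ne_of_mem_erase hj).symm
        (Finset.ne_of_mem_erase hq).symm).1
    have int5 : ∀ (l k : Fin m), ∀ i ∈ rN, ∀ p ∈ rN, ∀ j ∈ rN.erase i, Integrable
        (fun ω => ∑ q ∈ rN.erase p, Z i ω l * Z j ω l * Z p ω k * Z q ω k) P :=
      fun l k i hi p hp j hj => integrable_finset_sum _ (fun q hq => hTint l k i hi p hp j hj q hq)
    have int4 : ∀ (l k : Fin m), ∀ i ∈ rN, ∀ p ∈ rN, Integrable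
        (fun ω => ∑ j ∈ rN.erase i, ∑ q ∈ rN.erase p,
          Z i ω l * Z j ω l * Z p ω k * Z q ω k) P :=
      fun l k i hi p hp => integrable_finset_sum _ (fun j hj => int5 l k i hi p hp j hj)
    have int3 : ∀ (l k : Fin m), ∀ i ∈ rN, Integrable
        (fun ω => ∑ p ∈ rN, ∑ j ∈ rN.erase i, ∑ q ∈ rN.erase p,
          Z i ω l * Z j ω l * Z p ω k * Z q ω k) P :=
      fun l k i hi => integrable_finset_sum _ (fun p hp => int4 l k i hi p hp)
    have int2 : ∀ (l k : Fin m), Integrable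
        (fun ω => ∑ i ∈ rN, ∑ p ∈ rN, ∑ j ∈ rN.erase i, ∑ q ∈ rN.erase p,
          Z i ω l * Z j ω l * Z p ω k * Z q ω k) P :=
      fun l k => integrable_finset_sum _ (fun i hi => int3 l k i hi)
    have int1 : ∀ l : Fin m, Integrable
        (fun ω => ∑ k : Fin m, ∑ i ∈ rN, ∑ p ∈ rN, ∑ j ∈ rN.erase i, ∑ q ∈ rN.erase p,
          Z i ω l * Z j ω l * Z p ω k * Z q ω k) P :=
      fun l => integrable_finset_sum _ (fun k _ => int2 l k)
    have key : ∫ ω, (∑ l : Fin m, ∑ k : Fin m, ∑ i ∈ rN, ∑ p ∈ rN,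
          ∑ j ∈ rN.erase i, ∑ q ∈ rN.erase p,
            Z i ω l * Z j ω l * Z p ω k * Z q ω k) ∂P
        = ∑ l : Fin m, ∑ k : Fin m, ∑ i ∈ rN, ∑ p ∈ rN, ∑ j ∈ rN.erase i, ∑ q ∈ rN.erase p,
            (if (i = p ∧ j = q) ∨ (i = q ∧ j = p) then c2 l k else 0) := by
      rw [integral_finset_sum _ (fun l _ => int1 l)]
      refine Finset.sum_congr rfl fun l _ => ?_
      rw [integral_finset_sum _ (fun k _ => int2 l k)]
      refine Finset.sum_congr rfl fun k _ => ?_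
      rw [integral_finset_sum _ (fun i hi => int3 l k i hi)]
      refine Finset.sum_congr rfl fun i hi => ?_
      rw [integral_finset_sum _ (fun p hp => int4 l k i hi p hp)]
      refine Finset.sum_congr rfl fun p hp => ?_
      rw [integral_finset_sum _ (fun j hj => int5 l k i hi p hp j hj)]
      refine Finset.sum_congr rfl fun j hj => ?_
      rw [integral_finset_sum _ (fun q hq => hTint l k i hi p hp j hj q hq)]
      refine Finset.sum_congr rfl fun q hq => ?_
      exact (hquad l k i j p q (Finset.ne_of_mem_erase hj).symm
        (Finset.ne_of_mem_erase hq).symm).2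
    have inner2 : ∀ (l k : Fin m), ∀ i ∈ rN, ∀ j ∈ rN.erase i,
        (∑ p ∈ rN, ∑ q ∈ rN.erase p,
          (if (i = p ∧ j = q) ∨ (i = q ∧ j = p) then c2 l k else 0)) = 2 * c2 l k := by
      intro l k i hi j hj
      have hji : j ≠ i := (Finset.mem_erase.mp hj).1
      have hjN : j ∈ rN := (Finset.mem_erase.mp hj).2
      have hsub : ({i, j} : Finset ℕ) ⊆ rN := by
        intro x hx
        rcases Finset.mem_insert.mp hx with h | h
        · exact h ▸ hi
        · exact (Finset.mem_singleton.mp h) ▸ hjN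
      rw [← Finset.sum_subset hsub ?zero]
      case zero =>
        intro p _ hp
        refine Finset.sum_eq_zero fun q _ => ?_
        rw [if_neg]
        rintro (⟨h, -⟩ | ⟨-, h⟩)
        · exact hp (h ▸ Finset.mem_insert_self _ _)
        · exact hp (h ▸ Finset.mem_insert_of_mem (Finset.mem_singleton_self _))
      rw [Finset.sum_pair (fun h => hji h.symm)]
      have e1 : (∑ q ∈ rN.erase i,
          (if (i = i ∧ j = q) ∨ (i = q ∧ j = i) then c2 l k else 0)) = c2 l k := by
        have : ∀ q ∈ rN.erase i,
            (if (i = i ∧ j = q) ∨ (i = q ∧ j = i) then c2 l k else 0)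
            = (if q = j then c2 l k else 0) := by
          intro q hq
          have hqi : q ≠ i := (Finset.mem_erase.mp hq).1
          by_cases h : q = j
          · rw [if_pos h, if_pos (Or.inl ⟨rfl, h.symm⟩)]
          · rw [if_neg h, if_neg]
            rintro (⟨-, h'⟩ | ⟨h', -⟩)
            · exact h h'.symm
            · exact hqi h'.symm
        rw [Finset.sum_congr rfl this, Finset.sum_ite_eq' (rN.erase i) j,
          if_pos (Finset.mem_erase.mpr ⟨hji, hjN⟩)]
      have e2 : (∑ q ∈ rN.erase j,
          (if (i = j ∧ j = q) ∨ (i = q ∧ j = j) then c2 l k else 0)) = c2 l k := by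
        have : ∀ q ∈ rN.erase j,
            (if (i = j ∧ j = q) ∨ (i = q ∧ j = j) then c2 l k else 0)
            = (if q = i then c2 l k else 0) := by
          intro q hq
          have hqj : q ≠ j := (Finset.mem_erase.mp hq).1
          by_cases h : q = i
          · rw [if_pos h, if_pos (Or.inr ⟨h.symm, rfl⟩)]
          · rw [if_neg h, if_neg]
            rintro (⟨h', -⟩ | ⟨h', -⟩)
            · exact hji h'.symm
            · exact h h'.symm
        rw [Finset.sum_congr rfl this, Finset.sum_ite_eq' (rN.erase j) i,
          if_pos (Finset.mem_erase.mpr ⟨fun h => hji h.symm, hi⟩)]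
      rw [e1, e2]; ring
    have count : ∀ (l k : Fin m),
        (∑ i ∈ rN, ∑ p ∈ rN, ∑ j ∈ rN.erase i, ∑ q ∈ rN.erase p,
          (if (i = p ∧ j = q) ∨ (i = q ∧ j = p) then c2 l k else 0))
        = (N : ℝ) * (((N : ℝ) - 1) * (2 * c2 l k)) := by
      intro l k
      have : ∀ i ∈ rN, (∑ p ∈ rN, ∑ j ∈ rN.erase i, ∑ q ∈ rN.erase p,
            (if (i = p ∧ j = q) ∨ (i = q ∧ j = p) then c2 l k else 0))
          = ((N : ℝ) - 1) * (2 * c2 l k) := by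
        intro i hi
        rw [Finset.sum_comm]
        have := fun j hj => inner2 l k i hi j hj
        rw [Finset.sum_congr rfl this, Finset.sum_const, Finset.card_erase_of_mem hi,
          Finset.card_range, nsmul_eq_mul]
        congr 1
        push_cast [hN]
        ring
      rw [Finset.sum_congr rfl this, Finset.sum_const, Finset.card_range, nsmul_eq_mul]
    simp only [hA]
    rw [integral_const_mul, key]
    calc (1 / (N : ℝ) ^ 2) ^ 2 * ∑ l : Fin m, ∑ k : Fin m, ∑ i ∈ rN, ∑ p ∈ rN,
          ∑ j ∈ rN.erase i, ∑ q ∈ rN.erase p,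
            (if (i = p ∧ j = q) ∨ (i = q ∧ j = p) then c2 l k else 0)
        = (1 / (N : ℝ) ^ 2) ^ 2 * ∑ l : Fin m, ∑ k : Fin m,
            (N : ℝ) * (((N : ℝ) - 1) * (2 * c2 l k)) := by
          congr 1
          exact Finset.sum_congr rfl fun l _ => Finset.sum_congr rfl fun k _ => count l k
      _ = (2 / (N : ℝ) ^ 2) * (1 - 1 / N) * ∑ l : Fin m, ∑ k : Fin m, c2 l k := by
          simp_rw [← Finset.mul_sum]
          field_simp
  · -- the inequality
    have hpre : (0 : ℝ) ≤ (2 / (N : ℝ) ^ 2) * (1 - 1 / N) := by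
      apply mul_nonneg (by positivity)
      have h1 : (1 : ℝ) / N ≤ 1 := by
        rw [div_le_one hN0]
        exact_mod_cast hN
      linarith
    apply mul_le_mul_of_nonneg_left _ hpre
    rw [sq, Finset.sum_mul_sum]
    refine Finset.sum_le_sum fun l _ => Finset.sum_le_sum fun k _ => ?_
    calc (∫ ω, Z 0 ω l * Z 0 ω k ∂P) ^ 2
        ≤ (∫ ω, (Z 0 ω l) ^ 2 ∂P) * ∫ ω, (Z 0 ω k) ^ 2 ∂P :=
          cs_integral P (coordL2 hL2 hidist hcentered 0 l) (coordL2 hL2 hidist hcentered 0 k)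
      _ ≤ v l * v k := by
          apply mul_le_mul (hvar l) (hvar k)
            (integral_nonneg fun ω => sq_nonneg _) (hv l)
end
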